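/- arXiv:0912.0223 — 2 statements merged into one kernel-verified Lean document; each statement's English description precedes it below -/
import Mathlib

section
/- Let k ≥ 1, R > 0, and x ∈ E with ‖x‖ ≠ R. Let α ∈ ℝ and set s = 1 if α ≥ 2k and s = −1 if α < 2k. Then |S^k(R)| / (|R − s·‖x‖|^k · |R + s·‖x‖|^{α−k}) ≤ ∫_{y ∈ S^k(R)} ‖x − y‖^{−α} dμH[k](y) ≤ |S^k(R)| / (|R + s·‖x‖|^k · |R − s·‖x‖|^{α−k}), where all powers of positive reals are Real.rpow and |S^k(R)| = (μH[k] (S^k(R))).toReal. -/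
/-!
Write `‖x - y‖ ^ (-α) = ‖x - y‖ ^ (-2k) * ‖x - y‖ ^ (2k - α)`. On `S = sphere 0 R` the second
factor lies between its values at the extreme distances `|‖x‖ - R|` and `‖x‖ + R` (which one gives
the upper bound depends on the sign of `2k - α`: this is the choice of `s`), so everything reduces
to the identity `|‖x‖² - R²| ^ k * ∫_S ‖x - y‖ ^ (-2k) dμH[k] = μH[k] S`. It holds because the
inversion `f` centred at `x` with power `‖x‖² - R²` maps `S` onto itself and satisfies
`dist (f y) (f z) ^ 2 = ρ y * ρ z * dist y z ^ 2` with `ρ y = |‖x‖² - R²| / ‖x - y‖²`, so it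
multiplies `k`-dimensional Hausdorff measure by the density `ρ ^ k`. This change of variables
follows from the Lipschitz bound for Hausdorff measures, applied to `f` and to its inverse on the
pieces of `S` where `ρ` varies by a factor less than `c`, letting `c → 1`.
-/

open MeasureTheory Set Filter Metric
open scoped ENNReal NNReal Topology

theorem ENNReal.le_of_forall_one_lt_le_rpow_mul {a b : ℝ≥0∞} {d : ℝ}
    (h : ∀ c : ℝ≥0, 1 < c → a ≤ (c : ℝ≥0∞) ^ d * b) : a ≤ b := by
  have hpow : Tendsto (fun c : ℝ≥0 => (c : ℝ≥0∞) ^ d) (𝓝[>] 1) (𝓝 1) := by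
    have := ((ENNReal.continuous_rpow_const (y := d)).comp ENNReal.continuous_coe).tendsto 1
    simpa [Function.comp_def] using this.mono_left nhdsWithin_le_nhds
  have hlim := ENNReal.Tendsto.mul_const (b := b) hpow (Or.inl one_ne_zero)
  rw [one_mul] at hlim
  exact ge_of_tendsto hlim (eventually_nhdsWithin_of_forall fun c hc => h c hc)

section Conformal

variable {X Y : Type*} [MetricSpace X] [MeasurableSpace X] [BorelSpace X]
  [MetricSpace Y] [MeasurableSpace Y] [BorelSpace Y] {f : X → Y} {ρ : X → ℝ≥0} {A : Set X}
  {d : ℝ} {K c : ℝ≥0}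

theorem hausdorffMeasure_image_le_rpow_mul_setLIntegral (hd : 0 ≤ d) (hA : MeasurableSet A)
    (hf : ∀ y ∈ A, ∀ z ∈ A, dist (f y) (f z) ^ 2 ≤ ρ y * ρ z * dist y z ^ 2)
    (hρ : ∀ y ∈ A, K ≤ ρ y ∧ ρ y ≤ c * K) :
    μH[d] (f '' A) ≤ (c : ℝ≥0∞) ^ d * ∫⁻ y in A, (ρ y : ℝ≥0∞) ^ d ∂μH[d] := by
  have hlip : LipschitzOnWith (c * K) f A := LipschitzOnWith.of_dist_le_mul fun y hy z hz => by
    refine (pow_le_pow_iff_left₀ dist_nonneg (by positivity) two_ne_zero).1 ?_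
    calc dist (f y) (f z) ^ 2 ≤ ρ y * ρ z * dist y z ^ 2 := hf y hy z hz
      _ ≤ (c * K) * (c * K) * dist y z ^ 2 := by
          gcongr <;> exact_mod_cast (hρ _ ‹_›).2
      _ = ((c * K : ℝ≥0) * dist y z) ^ 2 := by push_cast; ring
  calc μH[d] (f '' A) ≤ ((c * K : ℝ≥0) : ℝ≥0∞) ^ d * μH[d] A := hlip.hausdorffMeasure_image_le hd
    _ = (c : ℝ≥0∞) ^ d * ∫⁻ _ in A, (K : ℝ≥0∞) ^ d ∂μH[d] := by
      rw [setLIntegral_const, ENNReal.coe_mul, ENNReal.mul_rpow_of_nonneg _ _ hd, mul_assoc]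
    _ ≤ (c : ℝ≥0∞) ^ d * ∫⁻ y in A, (ρ y : ℝ≥0∞) ^ d ∂μH[d] :=
      mul_le_mul_right (setLIntegral_mono' hA fun y hy => by gcongr; exact (hρ y hy).1) _

theorem setLIntegral_le_rpow_mul_hausdorffMeasure_image (hd : 0 ≤ d) (hA : MeasurableSet A)
    {g : Y → X} (hgf : LeftInvOn g f A) (hK : 0 < K)
    (hf : ∀ y ∈ A, ∀ z ∈ A, ρ y * ρ z * dist y z ^ 2 ≤ dist (f y) (f z) ^ 2)
    (hρ : ∀ y ∈ A, K ≤ ρ y ∧ ρ y ≤ c * K) :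
    ∫⁻ y in A, (ρ y : ℝ≥0∞) ^ d ∂μH[d] ≤ (c : ℝ≥0∞) ^ d * μH[d] (f '' A) := by
  have hlip : LipschitzOnWith K⁻¹ g (f '' A) := by
    refine LipschitzOnWith.of_dist_le_mul ?_
    rintro _ ⟨y, hy, rfl⟩ _ ⟨z, hz, rfl⟩
    rw [hgf hy, hgf hz, NNReal.coe_inv, le_inv_mul_iff₀ (by exact_mod_cast hK)]
    refine (pow_le_pow_iff_left₀ (by positivity) dist_nonneg two_ne_zero).1 ?_
    calc (K * dist y z) ^ 2 = K * K * dist y z ^ 2 := by ring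
      _ ≤ ρ y * ρ z * dist y z ^ 2 := by gcongr <;> exact_mod_cast (hρ _ ‹_›).1
      _ ≤ dist (f y) (f z) ^ 2 := hf y hy z hz
  have hμA : μH[d] A ≤ ((K⁻¹ : ℝ≥0) : ℝ≥0∞) ^ d * μH[d] (f '' A) := by
    simpa only [hgf.image_image] using hlip.hausdorffMeasure_image_le hd
  calc ∫⁻ y in A, (ρ y : ℝ≥0∞) ^ d ∂μH[d] ≤ ∫⁻ _ in A, ((c * K : ℝ≥0) : ℝ≥0∞) ^ d ∂μH[d] :=
        setLIntegral_mono' hA fun y hy => by gcongr; exact (hρ y hy).2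
    _ ≤ ((c * K : ℝ≥0) : ℝ≥0∞) ^ d * (((K⁻¹ : ℝ≥0) : ℝ≥0∞) ^ d * μH[d] (f '' A)) := by
      rw [setLIntegral_const]; exact mul_le_mul_right hμA _
    _ = (c : ℝ≥0∞) ^ d * μH[d] (f '' A) := by
      rw [← mul_assoc, ← ENNReal.mul_rpow_of_nonneg _ _ hd, ← ENNReal.coe_mul,
        mul_inv_cancel_right₀ hK.ne']

theorem hausdorffMeasure_image_le_and_setLIntegral_le (hd : 0 ≤ d) (hA : MeasurableSet A)
    (hfA : MeasurableSet (f '' A)) {g : Y → X} (hg : Measurable g) (hgf : LeftInvOn g f A)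
    (hρ : Measurable ρ) (hρA : ∀ y ∈ A, ρ y ≠ 0)
    (hf : ∀ y ∈ A, ∀ z ∈ A, dist (f y) (f z) ^ 2 = ρ y * ρ z * dist y z ^ 2) (hc : 1 < c) :
    μH[d] (f '' A) ≤ (c : ℝ≥0∞) ^ d * ∫⁻ y in A, (ρ y : ℝ≥0∞) ^ d ∂μH[d] ∧
      ∫⁻ y in A, (ρ y : ℝ≥0∞) ^ d ∂μH[d] ≤ (c : ℝ≥0∞) ^ d * μH[d] (f '' A) := by
  set Q : ℤ → Set ℝ≥0 := fun i => Ico (c ^ i) (c ^ (i + 1))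
  have hQd : Pairwise (Function.onFun Disjoint Q) := by
    simpa using (zpow_right_mono₀ hc.le).pairwise_disjoint_on_Ico_succ
  set P : ℤ → Set X := fun i => ρ ⁻¹' Q i ∩ A
  have hPm : ∀ i, MeasurableSet (P i) := fun i => (hρ measurableSet_Ico).inter hA
  have hPd : Pairwise (Function.onFun Disjoint P) := fun i j hij =>
    ((hQd hij).preimage ρ).mono inter_subset_left inter_subset_left
  have hPA : ⋃ i, P i = A := subset_antisymm (iUnion_subset fun _ => inter_subset_right)
    fun y hy => mem_iUnion.2 ((NNReal.exists_mem_Ico_zpow (hρA y hy) hc).imp fun _ hi => ⟨hi, hy⟩)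
  have hfP : ∀ i, f '' P i = (ρ ∘ g) ⁻¹' Q i ∩ f '' A := fun i => hgf.image_inter'
  have hρP : ∀ i, ∀ y ∈ P i, c ^ i ≤ ρ y ∧ ρ y ≤ c * c ^ i := fun i y hy =>
    ⟨hy.1.1, by rw [mul_comm, ← zpow_add_one₀ (by positivity)]; exact hy.1.2.le⟩
  have hμ : μH[d] (f '' A) = ∑' i, μH[d] (f '' P i) := by
    rw [← measure_iUnion, ← image_iUnion, hPA]
    · intro i j hij
      simp only [Function.onFun, hfP]
      exact ((hQd hij).preimage (ρ ∘ g)).mono inter_subset_left inter_subset_left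
    · exact fun i => hfP i ▸ ((hρ.comp hg) measurableSet_Ico).inter hfA
  have hI : ∫⁻ y in A, (ρ y : ℝ≥0∞) ^ d ∂μH[d] =
      ∑' i, ∫⁻ y in P i, (ρ y : ℝ≥0∞) ^ d ∂μH[d] := by
    rw [← lintegral_iUnion hPm hPd, hPA]
  rw [hμ, hI, ← ENNReal.tsum_mul_left, ← ENNReal.tsum_mul_left]
  exact ⟨ENNReal.tsum_le_tsum fun i => hausdorffMeasure_image_le_rpow_mul_setLIntegral hd (hPm i)
      (fun y hy z hz => (hf y hy.2 z hz.2).le) (hρP i),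
    ENNReal.tsum_le_tsum fun i => setLIntegral_le_rpow_mul_hausdorffMeasure_image hd (hPm i)
      (hgf.mono inter_subset_right) (zpow_pos (by positivity) i)
      (fun y hy z hz => (hf y hy.2 z hz.2).ge) (hρP i)⟩

theorem hausdorffMeasure_image_eq_setLIntegral (hd : 0 ≤ d) (hA : MeasurableSet A)
    (hfA : MeasurableSet (f '' A)) {g : Y → X} (hg : Measurable g) (hgf : LeftInvOn g f A)
    (hρ : Measurable ρ) (hρA : ∀ y ∈ A, ρ y ≠ 0)
    (hf : ∀ y ∈ A, ∀ z ∈ A, dist (f y) (f z) ^ 2 = ρ y * ρ z * dist y z ^ 2) :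
    μH[d] (f '' A) = ∫⁻ y in A, (ρ y : ℝ≥0∞) ^ d ∂μH[d] :=
  le_antisymm
    (ENNReal.le_of_forall_one_lt_le_rpow_mul fun _ hc =>
      (hausdorffMeasure_image_le_and_setLIntegral_le hd hA hfA hg hgf hρ hρA hf hc).1)
    (ENNReal.le_of_forall_one_lt_le_rpow_mul fun _ hc =>
      (hausdorffMeasure_image_le_and_setLIntegral_le hd hA hfA hg hgf hρ hρA hf hc).2)

end Conformal

section PowerInversion

variable {E : Type*} [NormedAddCommGroup E] [InnerProductSpace ℝ E]

/-- For `m > 0` this is `EuclideanGeometry.inversion x √m`; for `m < 0` it is the inversion of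
radius `√(-m)` followed by the point reflection in `x`. -/
noncomputable def powerInversion (x : E) (m : ℝ) (y : E) : E := x + (m / ‖y - x‖ ^ 2) • (y - x)

variable {x y z : E} {m : ℝ}

theorem dist_powerInversion_powerInversion (hy : y ≠ x) (hz : z ≠ x) :
    dist (powerInversion x m y) (powerInversion x m z) =
      |m| / (dist y x * dist z x) * dist y z := by
  have key := dist_div_norm_sq_smul (sub_ne_zero.2 hy) (sub_ne_zero.2 hz) 1
  have hsmul : ∀ w : E, (m / ‖w - x‖ ^ 2) • (w - x) = m • ((1 / ‖w - x‖) ^ 2 • (w - x)) :=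
    fun w => by rw [smul_smul]; congr 1; ring
  rw [powerInversion, powerInversion, dist_add_left, hsmul, hsmul, dist_smul₀, key,
    dist_sub_right, dist_eq_norm y x, dist_eq_norm z x, Real.norm_eq_abs]
  ring

theorem powerInversion_powerInversion (hm : m ≠ 0) (hy : y ≠ x) :
    powerInversion x m (powerInversion x m y) = y := by
  have hyx : ‖y - x‖ ≠ 0 := norm_ne_zero_iff.2 (sub_ne_zero.2 hy)
  have hsub : powerInversion x m y - x = (m / ‖y - x‖ ^ 2) • (y - x) := add_sub_cancel_left _ _
  rw [powerInversion, hsub, norm_smul, smul_smul, Real.norm_eq_abs, mul_pow, sq_abs]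
  have : m / ((m / ‖y - x‖ ^ 2) ^ 2 * ‖y - x‖ ^ 2) * (m / ‖y - x‖ ^ 2) = 1 := by
    field_simp
  rw [this, one_smul, add_sub_cancel]

theorem powerInversion_mem_sphere {c : E} {R : ℝ} (hR : 0 ≤ R) (hy : y ∈ sphere c R) (hyx : y ≠ x) :
    powerInversion x (‖x - c‖ ^ 2 - R ^ 2) y ∈ sphere c R := by
  rw [mem_sphere_iff_norm] at hy ⊢
  set u := x - c
  set w := y - x
  have hw : ‖w‖ ≠ 0 := norm_ne_zero_iff.2 (sub_ne_zero.2 hyx)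
  have hyc : y - c = u + w := by simp [u, w]
  have hpc : powerInversion x (‖u‖ ^ 2 - R ^ 2) y - c = u + ((‖u‖ ^ 2 - R ^ 2) / ‖w‖ ^ 2) • w := by
    simp only [powerInversion, u, w]; abel
  have hR2 : ‖u + w‖ ^ 2 = R ^ 2 := by rw [← hyc, hy]
  rw [hpc, ← sq_eq_sq₀ (norm_nonneg _) hR]
  rw [norm_add_sq_real] at hR2 ⊢
  rw [norm_smul, real_inner_smul_right, mul_pow, Real.norm_eq_abs, sq_abs]
  field_simp
  linear_combination (‖u‖ ^ 2 - R ^ 2) * hR2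

theorem measurable_powerInversion [MeasurableSpace E] [BorelSpace E] (x : E) (m : ℝ) :
    Measurable (powerInversion x m) := by
  unfold powerInversion; fun_prop

end PowerInversion

theorem hausdorffMeasure_sphere_eq_setLIntegral {E : Type*} [NormedAddCommGroup E]
    [InnerProductSpace ℝ E] [MeasurableSpace E] [BorelSpace E] {d : ℝ} (hd : 0 ≤ d) {c x : E}
    {R : ℝ} (hR : 0 ≤ R) (hx : x ∉ sphere c R) :
    μH[d] (sphere c R) =
      ∫⁻ y in sphere c R, ENNReal.ofReal ((|‖x - c‖ ^ 2 - R ^ 2| / ‖x - y‖ ^ 2) ^ d) ∂μH[d] := by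
  set m := ‖x - c‖ ^ 2 - R ^ 2
  have hm : m ≠ 0 := by
    rw [mem_sphere_iff_norm] at hx
    exact sub_ne_zero.2 fun h => hx ((sq_eq_sq₀ (norm_nonneg _) hR).1 h)
  have hne : ∀ y ∈ sphere c R, y ≠ x := fun y hy h => hx (h ▸ hy)
  have hinv : LeftInvOn (powerInversion x m) (powerInversion x m) (sphere c R) :=
    fun y hy => powerInversion_powerInversion hm (hne y hy)
  have hmaps : MapsTo (powerInversion x m) (sphere c R) (sphere c R) :=
    fun y hy => powerInversion_mem_sphere hR hy (hne y hy)
  have himage : powerInversion x m '' sphere c R = sphere c R :=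
    (hinv.surjOn hmaps).image_eq_of_mapsTo hmaps
  have hS : MeasurableSet (sphere c R) := isClosed_sphere.measurableSet
  calc μH[d] (sphere c R) = μH[d] (powerInversion x m '' sphere c R) := by rw [himage]
    _ = ∫⁻ y in sphere c R, ((‖m‖₊ / ‖x - y‖₊ ^ 2 : ℝ≥0) : ℝ≥0∞) ^ d ∂μH[d] :=
      hausdorffMeasure_image_eq_setLIntegral hd hS (by rwa [himage])
        (measurable_powerInversion x m) hinv (by fun_prop) (fun y hy => ?_) (fun y hy z hz => ?_)
    _ = _ := by
      refine lintegral_congr fun y => ?_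
      rw [← ENNReal.ofReal_coe_nnreal, ENNReal.ofReal_rpow_of_nonneg (by positivity) hd]
      push_cast
      rw [Real.norm_eq_abs]
  · exact div_ne_zero (nnnorm_ne_zero_iff.2 hm)
      (pow_ne_zero _ (nnnorm_ne_zero_iff.2 (sub_ne_zero.2 (hne y hy).symm)))
  · rw [dist_powerInversion_powerInversion (hne y hy) (hne z hz)]
    push_cast
    rw [Real.norm_eq_abs, ← dist_eq_norm', ← dist_eq_norm']
    field_simp

theorem div_le_setIntegral_and_setIntegral_le_div {X : Type*} [MeasurableSpace X] {μ : Measure X}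
    {S : Set X} (hS : MeasurableSet S) {w h : X → ℝ} (hh : AEStronglyMeasurable h (μ.restrict S))
    (hh₀ : ∀ y ∈ S, 0 ≤ h y) {P Q : ℝ} (hP : 0 < P) (hQ : 0 < Q)
    (hμS : μ S = ∫⁻ y in S, ENNReal.ofReal (w y) ∂μ)
    (hlo : ∀ y ∈ S, w y / P ≤ h y) (hhi : ∀ y ∈ S, h y ≤ w y / Q) :
    (μ S).toReal / P ≤ ∫ y in S, h y ∂μ ∧ ∫ y in S, h y ∂μ ≤ (μ S).toReal / Q := by
  have hscale : ∀ C : ℝ, 0 < C →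
      ∫⁻ y in S, ENNReal.ofReal (w y / C) ∂μ = μ S * ENNReal.ofReal C⁻¹ := fun C hC => by
    simp only [div_eq_mul_inv, ENNReal.ofReal_mul' (inv_nonneg.2 hC.le)]
    rw [lintegral_mul_const' _ _ ENNReal.ofReal_ne_top, hμS]
  have hlo' : μ S * ENNReal.ofReal P⁻¹ ≤ ∫⁻ y in S, ENNReal.ofReal (h y) ∂μ :=
    hscale P hP ▸ setLIntegral_mono' hS fun y hy => ENNReal.ofReal_le_ofReal (hlo y hy)
  have hhi' : ∫⁻ y in S, ENNReal.ofReal (h y) ∂μ ≤ μ S * ENNReal.ofReal Q⁻¹ :=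
    hscale Q hQ ▸ setLIntegral_mono' hS fun y hy => ENNReal.ofReal_le_ofReal (hhi y hy)
  have hint : ∫ y in S, h y ∂μ = (∫⁻ y in S, ENNReal.ofReal (h y) ∂μ).toReal :=
    integral_eq_lintegral_of_nonneg_ae (ae_restrict_of_forall_mem hS hh₀) hh
  have htoReal : ∀ C : ℝ, 0 < C → (μ S).toReal / C = (μ S * ENNReal.ofReal C⁻¹).toReal :=
    fun C hC => by
      rw [ENNReal.toReal_mul, ENNReal.toReal_ofReal (inv_nonneg.2 hC.le), div_eq_mul_inv]
  rw [hint, htoReal P hP, htoReal Q hQ]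
  -- If `μ S = ∞`, both sides of each bound are the junk value `0`.
  by_cases htop : μ S = ∞
  · have : ∫⁻ y in S, ENNReal.ofReal (h y) ∂μ = ∞ := by
      rw [htop, ENNReal.top_mul (by simpa using hP)] at hlo'
      exact top_le_iff.1 hlo'
    simp [this, htop]
  · have hfin : μ S * ENNReal.ofReal Q⁻¹ ≠ ∞ := ENNReal.mul_ne_top htop ENNReal.ofReal_ne_top
    exact ⟨ENNReal.toReal_mono (ne_top_of_le_ne_top hfin hhi') hlo', ENNReal.toReal_mono hfin hhi'⟩

theorem abs_sub_mul_abs_add_of_sq_eq_one {s : ℝ} (hs : s ^ 2 = 1) (R t : ℝ) :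
    |R - s * t| * |R + s * t| = |t ^ 2 - R ^ 2| := by
  rw [← abs_mul, abs_sub_comm (t ^ 2)]
  congr 1
  linear_combination -t ^ 2 * hs

theorem abs_sub_mul_pos_and_abs_add_mul_pos {s R t : ℝ} (hs : s ^ 2 = 1) (hR : 0 ≤ R)
    (htR : t ≠ R) (ht : 0 ≤ t) : 0 < |R - s * t| ∧ 0 < |R + s * t| := by
  have hprod : 0 < |R - s * t| * |R + s * t| := by
    rw [abs_sub_mul_abs_add_of_sq_eq_one hs]
    exact abs_pos.2 (sub_ne_zero.2 fun h => htR ((sq_eq_sq₀ ht hR).1 h))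
  exact ⟨pos_of_mul_pos_left hprod (abs_nonneg _), pos_of_mul_pos_right hprod (abs_nonneg _)⟩

theorem div_rpow_le_rpow_neg_and_rpow_neg_le_div {a b u : ℝ} (ha : 0 < a) (hb : 0 < b)
    (hu : 0 < u) {k α : ℝ} (hbu : (b / u) ^ (2 * k - α) ≤ 1) (hau : 1 ≤ (a / u) ^ (2 * k - α)) :
    (a * b / u ^ 2) ^ k / (a ^ k * b ^ (α - k)) ≤ u ^ (-α) ∧
      u ^ (-α) ≤ (a * b / u ^ 2) ^ k / (b ^ k * a ^ (α - k)) := by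
  have key : ∀ p q : ℝ, 0 < p → 0 < q →
      (p * q / u ^ 2) ^ k / (p ^ k * q ^ (α - k)) = u ^ (-α) * (q / u) ^ (2 * k - α) := by
    intro p q hp hq
    rw [Real.div_rpow (by positivity) (by positivity), Real.mul_rpow hp.le hq.le,
      Real.div_rpow hq.le hu.le, ← Real.rpow_natCast, ← Real.rpow_mul hu.le, Nat.cast_ofNat,
      two_mul, Real.rpow_sub hq, Real.rpow_sub hq, Real.rpow_sub hu, Real.rpow_add hq,
      Real.rpow_add hu, Real.rpow_neg hu.le]
    field_simp
  rw [key a b ha hb, mul_comm a b, key b a hb ha]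
  constructor
  · exact mul_le_of_le_one_right (by positivity) hbu
  · exact le_mul_of_one_le_right (by positivity) hau

theorem div_rpow_le_one_and_one_le_div_rpow {t R u k α s : ℝ} (htR : t ≠ R) (hlo : |t - R| ≤ u)
    (hhi : u ≤ t + R) (hs : s = if 2 * k ≤ α then 1 else -1) :
    (|R + s * t| / u) ^ (2 * k - α) ≤ 1 ∧ 1 ≤ (|R - s * t| / u) ^ (2 * k - α) := by
  have hδ : 0 < |R - t| := abs_pos.2 (sub_ne_zero.2 htR.symm)
  rw [abs_sub_comm] at hlo
  have hu : 0 < u := hδ.trans_le hlo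
  have hΔ : u ≤ |R + t| := hhi.trans (add_comm t R ▸ le_abs_self _)
  subst hs
  split_ifs with h
  · simp only [one_mul]
    exact ⟨Real.rpow_le_one_of_one_le_of_nonpos ((one_le_div hu).2 hΔ) (by linarith),
      Real.one_le_rpow_of_pos_of_le_one_of_nonpos (div_pos hδ hu) ((div_le_one hu).2 hlo)
        (by linarith)⟩
  · rw [neg_one_mul, ← sub_eq_add_neg, sub_neg_eq_add]
    exact ⟨Real.rpow_le_one (by positivity) ((div_le_one hu).2 hlo) (by linarith),
      Real.one_le_rpow ((one_le_div hu).2 hΔ) (by linarith)⟩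

theorem div_le_rpow_neg_dist_and_rpow_neg_dist_le_div {E : Type*} [NormedAddCommGroup E]
    {x y : E} {R k α s : ℝ} (hx : ‖x‖ ≠ R) (hy : ‖y‖ = R) (hs : s = if 2 * k ≤ α then 1 else -1) :
    (|‖x‖ ^ 2 - R ^ 2| / ‖x - y‖ ^ 2) ^ k / (|R - s * ‖x‖| ^ k * |R + s * ‖x‖| ^ (α - k)) ≤
        ‖x - y‖ ^ (-α) ∧
      ‖x - y‖ ^ (-α) ≤
        (|‖x‖ ^ 2 - R ^ 2| / ‖x - y‖ ^ 2) ^ k / (|R + s * ‖x‖| ^ k * |R - s * ‖x‖| ^ (α - k)) := by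
  have hs2 : s ^ 2 = 1 := by rw [hs]; split_ifs <;> norm_num
  obtain ⟨ha, hb⟩ := abs_sub_mul_pos_and_abs_add_mul_pos hs2 (hy ▸ norm_nonneg y) hx (norm_nonneg x)
  have hlo : |‖x‖ - R| ≤ ‖x - y‖ := hy ▸ abs_norm_sub_norm_le x y
  have hhi : ‖x - y‖ ≤ ‖x‖ + R := hy ▸ norm_sub_le x y
  have hu : 0 < ‖x - y‖ := (abs_pos.2 (sub_ne_zero.2 hx)).trans_le hlo
  obtain ⟨hb', ha'⟩ := div_rpow_le_one_and_one_le_div_rpow hx hlo hhi hs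
  rw [← abs_sub_mul_abs_add_of_sq_eq_one hs2]
  exact div_rpow_le_rpow_neg_and_rpow_neg_le_div ha hb hu hb' ha'

theorem distance_power_integral_bounds_general
    (k : ℕ) (R : ℝ) (hR : 0 < R)
    (x : EuclideanSpace ℝ (Fin (k + 1))) (hx : ‖x‖ ≠ R) (α : ℝ) :
    (μH[k] (Metric.sphere (0 : EuclideanSpace ℝ (Fin (k + 1))) R)).toReal
        / (|R - (if 2 * (k : ℝ) ≤ α then (1 : ℝ) else -1) * ‖x‖| ^ (k : ℝ)
            * |R + (if 2 * (k : ℝ) ≤ α then (1 : ℝ) else -1) * ‖x‖| ^ (α - k))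
      ≤ ∫ y in Metric.sphere (0 : EuclideanSpace ℝ (Fin (k + 1))) R,
          ‖x - y‖ ^ (-α) ∂μH[k]
    ∧ ∫ y in Metric.sphere (0 : EuclideanSpace ℝ (Fin (k + 1))) R,
          ‖x - y‖ ^ (-α) ∂μH[k]
      ≤ (μH[k] (Metric.sphere (0 : EuclideanSpace ℝ (Fin (k + 1))) R)).toReal
        / (|R + (if 2 * (k : ℝ) ≤ α then (1 : ℝ) else -1) * ‖x‖| ^ (k : ℝ)
            * |R - (if 2 * (k : ℝ) ≤ α then (1 : ℝ) else -1) * ‖x‖| ^ (α - k)) := by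
  set s : ℝ := if 2 * (k : ℝ) ≤ α then 1 else -1 with hs
  obtain ⟨ha, hb⟩ := abs_sub_mul_pos_and_abs_add_mul_pos (s := s)
    (by rw [hs]; split_ifs <;> norm_num) hR.le hx (norm_nonneg x)
  have hμ := hausdorffMeasure_sphere_eq_setLIntegral (d := k) k.cast_nonneg (c := 0) (x := x)
    hR.le (by simpa using hx)
  simp only [sub_zero] at hμ
  exact div_le_setIntegral_and_setIntegral_le_div isClosed_sphere.measurableSet
    ((measurable_const.sub measurable_id).norm.pow_const _).aestronglyMeasurable
    (fun y _ => by positivity) (by positivity) (by positivity) hμ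
    (fun y hy => (div_le_rpow_neg_dist_and_rpow_neg_dist_le_div hx
      (mem_sphere_zero_iff_norm.1 hy) hs).1)
    (fun y hy => (div_le_rpow_neg_dist_and_rpow_neg_dist_le_div hx
      (mem_sphere_zero_iff_norm.1 hy) hs).2)

/-- Sharper bounds for `∫_{S^k(R)} ‖x − y‖^{−α}`:
`|S^k(R)| / (|R − s‖x‖|^k |R + s‖x‖|^{α−k}) ≤ ∫ ≤ |S^k(R)| / (|R + s‖x‖|^k |R − s‖x‖|^{α−k})`,
where `s = 1` if `α ≥ 2k` and `s = −1` if `α < 2k`. -/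
theorem distance_power_integral_bounds
    (k : ℕ) (hk : 1 ≤ k) (R : ℝ) (hR : 0 < R)
    (x : EuclideanSpace ℝ (Fin (k + 1))) (hx : ‖x‖ ≠ R) (α : ℝ) :
    (μH[k] (Metric.sphere (0 : EuclideanSpace ℝ (Fin (k + 1))) R)).toReal
        / (|R - (if 2 * (k : ℝ) ≤ α then (1 : ℝ) else -1) * ‖x‖| ^ (k : ℝ)
            * |R + (if 2 * (k : ℝ) ≤ α then (1 : ℝ) else -1) * ‖x‖| ^ (α - k))
      ≤ ∫ y in Metric.sphere (0 : EuclideanSpace ℝ (Fin (k + 1))) R,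
          ‖x - y‖ ^ (-α) ∂μH[k]
    ∧ ∫ y in Metric.sphere (0 : EuclideanSpace ℝ (Fin (k + 1))) R,
          ‖x - y‖ ^ (-α) ∂μH[k]
      ≤ (μH[k] (Metric.sphere (0 : EuclideanSpace ℝ (Fin (k + 1))) R)).toReal
        / (|R + (if 2 * (k : ℝ) ≤ α then (1 : ℝ) else -1) * ‖x‖| ^ (k : ℝ)
            * |R - (if 2 * (k : ℝ) ≤ α then (1 : ℝ) else -1) * ‖x‖| ^ (α - k)) :=
  distance_power_integral_bounds_general k R hR x hx α
end

section
/- (Lower bounds for the radial Dirichlet eigenvalue.) Fix ρ > 0, δ > 0 and an integer k ≥ 1. Let λ ∈ ℝ and let φ : ℝ → ℝ be continuous on [0, δ], twice differentiable on (0, δ), with φ(0) = 1, φ(δ) = 0, and φ''(r) + (k/ρ)·coth(r/ρ)·φ'(r) + λ·φ(r) = 0 for all r ∈ (0, δ). Then λ > k²/(4ρ²) + (π/(2δ))². Moreover, if k ≥ 3, then λ > k²/(4ρ²) + (π/δ)². -/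
/-!
With `σ = sinh (r / ρ) ^ (k / 2)` the equation reads `(σ² φ')' + λ σ² φ = 0`. Take `f > 0`
nonincreasing with `(σ² f')' + B σ² f < 0` and `σ² f = O(r)`, and suppose `λ ≤ B`. Then the
Wronskian `W = σ² (φ' f - φ f')` satisfies `W' = -φ ((σ² f')' + λ σ² f) > 0` up to the first zero
`r₀` of `φ`. But `W` cannot stay negative near `0`, for then `φ' ≤ -c / r` and `φ` blows up, and it
cannot stay positive near `r₀`, for then `φ' > 0` there while `φ` drops to `φ r₀ = 0`.

For `f = v / σ` the condition on `f` becomes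
`v'' + (B - k² / (4ρ²) - k (k - 2) / (4ρ² sinh² (r / ρ))) v < 0`, which `v = sin (π r / δ)`
satisfies with `B = k² / (4ρ²) + (π / δ)²` when `k > 2`, and `v = √r cos (π r / (2δ))` with
`B = k² / (4ρ²) + (π / (2δ))²` when `k ≥ 1`.
-/

open Real Set Filter Topology

lemma sub_le_mul_of_monotoneOn_deriv {f f' : ℝ → ℝ} {t : ℝ} (ht : 0 ≤ t)
    (hf : ∀ x, HasDerivAt f (f' x) x) (hf' : MonotoneOn f' (Icc 0 t)) :
    f t - f 0 ≤ t * f' t := by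
  rcases ht.eq_or_lt with rfl | ht
  · simp
  obtain ⟨ξ, hξ, hslope⟩ := exists_hasDerivAt_eq_slope f f' ht
    (fun x _ => (hf x).continuousAt.continuousWithinAt) (fun x _ => hf x)
  rw [sub_zero, eq_div_iff ht.ne'] at hslope
  rw [← hslope, mul_comm]
  exact mul_le_mul_of_nonneg_left
    (hf' (Ioo_subset_Icc_self hξ) (right_mem_Icc.2 ht.le) hξ.2.le) ht.le

lemma sinh_le_mul_cosh {t : ℝ} (ht : 0 ≤ t) : sinh t ≤ t * cosh t := by
  simpa using sub_le_mul_of_monotoneOn_deriv ht hasDerivAt_sinh fun x hx y hy hxy =>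
    cosh_le_cosh.2 (by rwa [abs_of_nonneg hx.1, abs_of_nonneg hy.1])

lemma mul_cos_le_sin {t : ℝ} (ht : 0 ≤ t) (htπ : t ≤ π) : t * cos t ≤ sin t := by
  have := sub_le_mul_of_monotoneOn_deriv (f := fun x => -sin x) ht
    (fun x => (hasDerivAt_sin x).neg)
    (strictAntiOn_cos.antitoneOn.mono (Icc_subset_Icc_right htπ)).neg
  simp only [sin_zero, neg_zero, sub_zero, mul_neg, neg_le_neg_iff] at this
  exact this

lemma exists_first_zero {φ : ℝ → ℝ} {a b : ℝ} (hab : a ≤ b) (hφ : ContinuousOn φ (Icc a b))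
    (ha : 0 < φ a) (hb : φ b ≤ 0) : ∃ c ∈ Ioc a b, φ c = 0 ∧ ∀ x ∈ Ico a c, 0 < φ x := by
  set S := Icc a b ∩ φ ⁻¹' Iic 0
  have hSbdd : BddBelow S := ⟨a, fun x hx => hx.1.1⟩
  have hcS : sInf S ∈ S := (hφ.preimage_isClosed_of_isClosed isClosed_Icc isClosed_Iic).csInf_mem
    ⟨b, right_mem_Icc.2 hab, hb⟩ hSbdd
  have hpos : ∀ x ∈ Ico a (sInf S), 0 < φ x := fun x hx => by
    by_contra! hx0
    exact hx.2.not_ge (csInf_le hSbdd ⟨⟨hx.1, hx.2.le.trans hcS.1.2⟩, hx0⟩)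
  have hac : a < sInf S := hcS.1.1.lt_of_ne fun h => (h ▸ ha).not_ge hcS.2
  obtain ⟨x, hx, hx0⟩ := intermediate_value_Icc' hac.le (hφ.mono (Icc_subset_Icc_right hcS.1.2))
    ⟨hcS.2, ha.le⟩
  obtain rfl : x = sInf S := by
    by_contra hne
    exact (hpos x ⟨hx.1, hx.2.lt_of_ne hne⟩).ne' hx0
  exact ⟨sInf S, ⟨hac, hcS.1.2⟩, hx0, hpos⟩

lemma tendsto_atTop_of_hasDerivAt_le_neg_div {φ φ' : ℝ → ℝ} {b c : ℝ} (hb : 0 < b) (hc : 0 < c)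
    (hφ : ∀ r ∈ Ioo 0 b, HasDerivAt φ (φ' r) r) (hle : ∀ r ∈ Ioo 0 b, φ' r ≤ -c / r) :
    Tendsto φ (𝓝[>] 0) atTop := by
  have hderiv : ∀ r ∈ Ioo 0 b, HasDerivAt (fun x => φ x + c * log x) (φ' r + c * r⁻¹) r :=
    fun r hr => (hφ r hr).add ((hasDerivAt_log hr.1.ne').const_mul c)
  have hanti : AntitoneOn (fun x => φ x + c * log x) (Ioo 0 b) := by
    refine antitoneOn_of_deriv_nonpos (convex_Ioo 0 b)
      (fun r hr => (hderiv r hr).continuousAt.continuousWithinAt)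
      (fun r hr => (hderiv r (interior_subset hr)).differentiableAt.differentiableWithinAt)
      fun r hr => ?_
    rw [interior_Ioo] at hr
    have := hle r hr
    rw [(hderiv r hr).deriv, ← div_eq_mul_inv]
    linarith [neg_div r c]
  have hlog : Tendsto (fun x => φ (b / 2) + c * log (b / 2) + c * -log x) (𝓝[>] 0) atTop :=
    tendsto_atTop_add_const_left _ _
      ((tendsto_neg_atBot_atTop.comp tendsto_log_nhdsGT_zero).const_mul_atTop hc)
  refine tendsto_atTop_mono' _ ?_ hlog
  filter_upwards [Ioo_mem_nhdsGT (half_pos hb)] with r hr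
  have := hanti ⟨hr.1, hr.2.trans (half_lt_self hb)⟩ ⟨half_pos hb, half_lt_self hb⟩ hr.2.le
  simp only at this
  linarith

section Wronskian

variable {w φ φ' f f' g : ℝ → ℝ}

def weightedWronskian (w φ φ' f f' : ℝ → ℝ) (x : ℝ) : ℝ :=
  w x * φ' x * f x - w x * f' x * φ x

lemma mul_deriv_eq_weightedWronskian_add (x : ℝ) :
    w x * f x * φ' x = weightedWronskian w φ φ' f f' x + w x * f' x * φ x := by
  unfold weightedWronskian; ring

lemma hasDerivAt_weightedWronskian {lam r : ℝ} (hφ : HasDerivAt φ (φ' r) r)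
    (hφ' : HasDerivAt (fun x => w x * φ' x) (-(lam * w r * φ r)) r)
    (hf : HasDerivAt f (f' r) r) (hf' : HasDerivAt (fun x => w x * f' x) (g r) r) :
    HasDerivAt (weightedWronskian w φ φ' f f') (-(φ r * (g r + lam * w r * f r))) r :=
  ((hφ'.mul hf).sub (hf'.mul hφ)).congr_deriv (by ring)

lemma strictMonoOn_weightedWronskian {a b lam B : ℝ} (hlam : lam ≤ B)
    (hφ : ∀ r ∈ Ioo a b, HasDerivAt φ (φ' r) r)
    (hφ' : ∀ r ∈ Ioo a b, HasDerivAt (fun x => w x * φ' x) (-(lam * w r * φ r)) r)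
    (hf : ∀ r ∈ Ioo a b, HasDerivAt f (f' r) r)
    (hf' : ∀ r ∈ Ioo a b, HasDerivAt (fun x => w x * f' x) (g r) r)
    (hφpos : ∀ r ∈ Ioo a b, 0 < φ r) (hw : ∀ r ∈ Ioo a b, 0 < w r)
    (hfpos : ∀ r ∈ Ioo a b, 0 < f r) (hsuper : ∀ r ∈ Ioo a b, g r + B * w r * f r < 0) :
    StrictMonoOn (weightedWronskian w φ φ' f f') (Ioo a b) := by
  have hW r (hr : r ∈ Ioo a b) := hasDerivAt_weightedWronskian (hφ r hr) (hφ' r hr) (hf r hr)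
    (hf' r hr)
  refine strictMonoOn_of_deriv_pos (convex_Ioo a b)
    (fun r hr => (hW r hr).continuousAt.continuousWithinAt) fun r hr => ?_
  rw [interior_Ioo] at hr
  rw [(hW r hr).deriv, neg_pos]
  refine mul_neg_of_pos_of_neg (hφpos r hr) ?_
  have := mul_le_mul_of_nonneg_right hlam (mul_pos (hw r hr) (hfpos r hr)).le
  linarith [hsuper r hr]

lemma exists_weightedWronskian_pos {b C : ℝ} (hb : 0 < b) (hφ0 : ContinuousWithinAt φ (Ioi 0) 0)
    (hφ : ∀ r ∈ Ioo 0 b, HasDerivAt φ (φ' r) r) (hφpos : ∀ r ∈ Ioo 0 b, 0 < φ r)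
    (hw : ∀ r ∈ Ioo 0 b, 0 < w r) (hfpos : ∀ r ∈ Ioo 0 b, 0 < f r)
    (hf'nonpos : ∀ r ∈ Ioo 0 b, f' r ≤ 0) (hC : ∀ r ∈ Ioo 0 b, w r * f r ≤ C * r)
    (hW : StrictMonoOn (weightedWronskian w φ φ' f f') (Ioo 0 b)) :
    ∃ r ∈ Ioo 0 b, 0 < weightedWronskian w φ φ' f f' r := by
  by_contra! hWnonpos
  set W := weightedWronskian w φ φ' f f'
  have hb₄ : b / 4 ∈ Ioo 0 b := ⟨by linarith, by linarith⟩
  have hb₂ : b / 2 ∈ Ioo 0 b := ⟨by linarith, by linarith⟩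
  have hWb : W (b / 4) < 0 := (hW hb₄ hb₂ (by linarith)).trans_le (hWnonpos _ hb₂)
  have hCpos : 0 < C := by
    have := hC _ hb₄
    have := mul_pos (hw _ hb₄) (hfpos _ hb₄)
    nlinarith
  -- Below `b / 4` we get `φ' ≤ W (b / 4) / (w f) ≤ W (b / 4) / (C r)`, so `φ` blows up at `0`.
  refine not_tendsto_nhds_of_tendsto_atTop (tendsto_atTop_of_hasDerivAt_le_neg_div hb₄.1
    (div_pos (neg_pos.2 hWb) hCpos) (fun r hr => hφ r ⟨hr.1, hr.2.trans hb₄.2⟩)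
    fun r hr => ?_) (φ 0) hφ0
  have hr' : r ∈ Ioo 0 b := ⟨hr.1, hr.2.trans hb₄.2⟩
  have hwf := mul_pos (hw r hr') (hfpos r hr')
  have hflux : w r * f' r * φ r ≤ 0 := mul_nonpos_of_nonpos_of_nonneg
    (mul_nonpos_of_nonneg_of_nonpos (hw r hr').le (hf'nonpos r hr')) (hφpos r hr').le
  calc φ' r ≤ -(-W (b / 4) / (w r * f r)) := by
        rw [neg_div, neg_neg, le_div_iff₀ hwf, mul_comm,
          mul_deriv_eq_weightedWronskian_add (φ := φ) (f' := f')]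
        linarith [hW hr' hb₄ hr.2]
    _ ≤ -(-W (b / 4) / (C * r)) :=
        neg_le_neg (div_le_div_of_nonneg_left (by linarith) hwf (hC r hr'))
    _ = -(-W (b / 4) / C) / r := by field_simp

lemma exists_weightedWronskian_lt {a b c : ℝ} (hab : a < b) (hc : 0 < c)
    (hφc : ContinuousOn φ (Icc a b)) (hφ : ∀ r ∈ Ioo a b, HasDerivAt φ (φ' r) r)
    (hφb : φ b = 0) (hφpos : ∀ r ∈ Ioo a b, 0 < φ r)
    (hw : ∀ r ∈ Ioo a b, 0 < w r) (hfpos : ∀ r ∈ Ioo a b, 0 < f r)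
    (hlim : Tendsto (fun r => w r * f' r * φ r) (𝓝[<] b) (𝓝 0)) :
    ∃ r ∈ Ioo a b, weightedWronskian w φ φ' f f' r < c := by
  by_contra! hW
  obtain ⟨l, hl, hlsub⟩ := mem_nhdsLT_iff_exists_Ioo_subset.1
    (hlim.eventually (Ioo_mem_nhds (neg_lt_zero.2 hc) hc))
  obtain ⟨m, hm, ham⟩ : ∃ m ∈ Ioo l b, a < m := by
    have := max_lt hl hab
    exact ⟨(max l a + b) / 2, ⟨by linarith [le_max_left l a], by linarith⟩,
      by linarith [le_max_right l a]⟩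
  obtain ⟨ξ, hξ, hslope⟩ := exists_hasDerivAt_eq_slope φ φ' hm.2
    (hφc.mono (Icc_subset_Icc_left ham.le)) fun x hx => hφ x ⟨ham.trans hx.1, hx.2⟩
  have hξ' : ξ ∈ Ioo a b := ⟨ham.trans hξ.1, hξ.2⟩
  -- Near `b`, `w f φ' = W + w f' φ > c - c = 0`, yet `φ` drops from `φ m > 0` to `φ b = 0`.
  have hφ'ξ : 0 < φ' ξ := by
    refine pos_of_mul_pos_right (a := w ξ * f ξ) ?_ (mul_pos (hw ξ hξ') (hfpos ξ hξ')).le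
    rw [mul_deriv_eq_weightedWronskian_add (φ := φ) (f' := f')]
    linarith [hW ξ hξ', (hlsub ⟨hm.1.trans hξ.1, hξ.2⟩).1]
  have : φ' ξ < 0 := by
    rw [hslope, hφb]
    exact div_neg_of_neg_of_pos (by linarith [hφpos m ⟨ham, hm.2⟩]) (by linarith [hm.2])
  linarith

theorem lt_of_sturm_comparison {δ lam B C : ℝ} (hδ : 0 ≤ δ)
    (hφc : ContinuousOn φ (Icc 0 δ)) (hφ0 : 0 < φ 0) (hφδ : φ δ = 0)
    (hφ : ∀ r ∈ Ioo 0 δ, HasDerivAt φ (φ' r) r)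
    (hφ' : ∀ r ∈ Ioo 0 δ, HasDerivAt (fun x => w x * φ' x) (-(lam * w r * φ r)) r)
    (hw : ∀ r ∈ Ioo 0 δ, 0 < w r)
    (hf : ∀ r ∈ Ioo 0 δ, HasDerivAt f (f' r) r)
    (hf' : ∀ r ∈ Ioo 0 δ, HasDerivAt (fun x => w x * f' x) (g r) r)
    (hflux : ContinuousOn (fun x => w x * f' x) (Ioc 0 δ))
    (hfpos : ∀ r ∈ Ioo 0 δ, 0 < f r) (hf'nonpos : ∀ r ∈ Ioo 0 δ, f' r ≤ 0)
    (hsuper : ∀ r ∈ Ioo 0 δ, g r + B * w r * f r < 0)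
    (hC : ∀ r ∈ Ioo 0 δ, w r * f r ≤ C * r) :
    B < lam := by
  by_contra! hlam
  obtain ⟨r₀, ⟨hr₀, hr₀δ⟩, hφr₀, hφpos⟩ := exists_first_zero hδ hφc hφ0 hφδ.le
  have hsub : Ioo 0 r₀ ⊆ Ioo 0 δ := Ioo_subset_Ioo_right hr₀δ
  have hIcc : Icc 0 r₀ ⊆ Icc 0 δ := Icc_subset_Icc_right hr₀δ
  have hφpos' r (hr : r ∈ Ioo 0 r₀) : 0 < φ r := hφpos r ⟨hr.1.le, hr.2⟩
  have hWmono := strictMonoOn_weightedWronskian hlam (fun r hr => hφ r (hsub hr))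
    (fun r hr => hφ' r (hsub hr)) (fun r hr => hf r (hsub hr)) (fun r hr => hf' r (hsub hr))
    hφpos' (fun r hr => hw r (hsub hr)) (fun r hr => hfpos r (hsub hr))
    (fun r hr => hsuper r (hsub hr))
  obtain ⟨r₁, hr₁, hWr₁⟩ := exists_weightedWronskian_pos hr₀
    ((hφc 0 ⟨le_rfl, hδ⟩).mono_of_mem_nhdsWithin
      (mem_of_superset (Ioo_mem_nhdsGT hr₀) (Ioo_subset_Icc_self.trans hIcc)))
    (fun r hr => hφ r (hsub hr)) hφpos' (fun r hr => hw r (hsub hr))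
    (fun r hr => hfpos r (hsub hr)) (fun r hr => hf'nonpos r (hsub hr)) (fun r hr => hC r (hsub hr))
    hWmono
  have hlim : Tendsto (fun r => w r * f' r * φ r) (𝓝[<] r₀) (𝓝 0) := by
    have hnhds : Ioo 0 r₀ ∈ 𝓝[<] r₀ := Ioo_mem_nhdsLT hr₀
    have h₁ := ((hflux r₀ ⟨hr₀, hr₀δ⟩).mono_of_mem_nhdsWithin
      (mem_of_superset hnhds (Ioo_subset_Ioc_self.trans (Ioc_subset_Ioc_right hr₀δ)))).tendsto
    have h₂ := ((hφc r₀ ⟨hr₀.le, hr₀δ⟩).mono_of_mem_nhdsWithin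
      (mem_of_superset hnhds (Ioo_subset_Icc_self.trans hIcc))).tendsto
    rw [hφr₀] at h₂
    simpa using h₁.mul h₂
  have hsub₁ : Ioo r₁ r₀ ⊆ Ioo 0 r₀ := Ioo_subset_Ioo_left hr₁.1.le
  obtain ⟨r, hr, hWr⟩ := exists_weightedWronskian_lt hr₁.2 hWr₁
    (hφc.mono ((Icc_subset_Icc_left hr₁.1.le).trans hIcc)) (fun r hr => hφ r (hsub (hsub₁ hr)))
    hφr₀ (fun r hr => hφpos' r (hsub₁ hr)) (fun r hr => hw r (hsub (hsub₁ hr)))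
    (fun r hr => hfpos r (hsub (hsub₁ hr))) hlim
  exact (hWmono hr₁ (hsub₁ hr) hr.1).not_gt hWr

end Wronskian

lemma hasDerivAt_sinh_div_rpow {ρ a r : ℝ} (hs : sinh (r / ρ) ≠ 0) :
    HasDerivAt (fun x => sinh (x / ρ) ^ a)
      (a / ρ * (cosh (r / ρ) / sinh (r / ρ)) * sinh (r / ρ) ^ a) r := by
  refine (((hasDerivAt_id' r).div_const ρ).sinh.rpow_const (p := a) (Or.inl hs)).congr_deriv ?_
  rw [rpow_sub_one hs]
  field_simp

lemma hasDerivAt_coth_mul_sinh_div_rpow {ρ a r : ℝ} (hs : sinh (r / ρ) ≠ 0) :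
    HasDerivAt (fun x => a / ρ * (cosh (x / ρ) / sinh (x / ρ)) * sinh (x / ρ) ^ a)
      (sinh (r / ρ) ^ a * (a ^ 2 / ρ ^ 2 + a * (a - 1) / (ρ ^ 2 * sinh (r / ρ) ^ 2))) r := by
  have hρ : ρ ≠ 0 := by rintro rfl; simp at hs
  have hx := (hasDerivAt_id' r).div_const ρ
  refine (((hx.cosh.fun_div hx.sinh hs).const_mul (a / ρ)).fun_mul
    (hasDerivAt_sinh_div_rpow (a := a) hs)).congr_deriv ?_
  field_simp
  rw [cosh_sq]
  ring

lemma hasDerivAt_sq_mul_div_deriv {σ σ' v v' : ℝ → ℝ} {σ'' v'' r : ℝ} (hσ0 : σ r ≠ 0)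
    (hσ : HasDerivAt σ (σ' r) r) (hσ' : HasDerivAt σ' σ'' r)
    (hv : HasDerivAt v (v' r) r) (hv' : HasDerivAt v' v'' r) :
    HasDerivAt (fun x => σ x ^ 2 * ((v' x * σ x - v x * σ' x) / σ x ^ 2))
      (v'' * σ r - v r * σ'') r := by
  have hflux : (fun x => v' x * σ x - v x * σ' x) =ᶠ[𝓝 r]
      fun x => σ x ^ 2 * ((v' x * σ x - v x * σ' x) / σ x ^ 2) := by
    filter_upwards [hσ.continuousAt.eventually_ne hσ0] with x hx
    field_simp
  exact (((hv'.fun_mul hσ).fun_sub (hv.fun_mul hσ')).congr_deriv (by ring)).congr_of_eventuallyEq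
    hflux.symm

theorem lt_of_radial_supersolution {ρ δ k lam B C : ℝ} {φ v v' v'' : ℝ → ℝ}
    (hρ : 0 < ρ) (hδ : 0 ≤ δ) (hc : ContinuousOn φ (Icc 0 δ))
    (hd : ∀ r ∈ Ioo 0 δ, DifferentiableAt ℝ φ r ∧ DifferentiableAt ℝ (deriv φ) r)
    (h0 : 0 < φ 0) (hδ0 : φ δ = 0)
    (heq : ∀ r ∈ Ioo 0 δ, deriv (deriv φ) r
      + k / ρ * (cosh (r / ρ) / sinh (r / ρ)) * deriv φ r + lam * φ r = 0)
    (hv : ∀ r ∈ Ioc 0 δ, HasDerivAt v (v' r) r) (hv' : ∀ r ∈ Ioc 0 δ, HasDerivAt v' (v'' r) r)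
    (hvpos : ∀ r ∈ Ioo 0 δ, 0 < v r)
    (hv'le : ∀ r ∈ Ioo 0 δ, v' r ≤ k / (2 * ρ) * (cosh (r / ρ) / sinh (r / ρ)) * v r)
    (hsuper : ∀ r ∈ Ioo 0 δ, v'' r
      + (B - k ^ 2 / (4 * ρ ^ 2) - k * (k - 2) / (4 * ρ ^ 2 * sinh (r / ρ) ^ 2)) * v r < 0)
    (hC : ∀ r ∈ Ioo 0 δ, sinh (r / ρ) ^ (k / 2) * v r ≤ C * r) :
    B < lam := by
  set σ : ℝ → ℝ := fun x => sinh (x / ρ) ^ (k / 2)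
  set σ' : ℝ → ℝ := fun x => k / 2 / ρ * (cosh (x / ρ) / sinh (x / ρ)) * sinh (x / ρ) ^ (k / 2)
  have hs r (hr : 0 < r) : 0 < sinh (r / ρ) := sinh_pos_iff.2 (div_pos hr hρ)
  have hσpos r (hr : 0 < r) : 0 < σ r := rpow_pos_of_pos (hs r hr) _
  have hσ r (hr : 0 < r) : HasDerivAt σ (σ' r) r := hasDerivAt_sinh_div_rpow (hs r hr).ne'
  have hσ' r (hr : 0 < r) := hasDerivAt_coth_mul_sinh_div_rpow (a := k / 2) (hs r hr).ne'
  have hflux r (hr : r ∈ Ioc 0 δ) :=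
    hasDerivAt_sq_mul_div_deriv (hσpos r hr.1).ne' (hσ r hr.1) (hσ' r hr.1) (hv r hr) (hv' r hr)
  refine lt_of_sturm_comparison (w := fun x => σ x ^ 2) (f := fun x => v x / σ x) (C := C)
    hδ hc h0 hδ0
    (fun r hr => (hd r hr).1.hasDerivAt) (fun r hr => ?_) (fun r hr => pow_pos (hσpos r hr.1) 2)
    (fun r hr => (hv r (Ioo_subset_Ioc_self hr)).fun_div (hσ r hr.1) (hσpos r hr.1).ne')
    (fun r hr => hflux r (Ioo_subset_Ioc_self hr))
    (fun r hr => (hflux r hr).continuousAt.continuousWithinAt)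
    (fun r hr => div_pos (hvpos r hr) (hσpos r hr.1)) (fun r hr => ?_) (fun r hr => ?_)
    (fun r hr => ?_)
  · have hsr := hs r hr.1
    refine (((hσ r hr.1).fun_pow 2).fun_mul (hd r hr).2.hasDerivAt).congr_deriv ?_
    rw [show deriv (deriv φ) r = -(k / ρ * (cosh (r / ρ) / sinh (r / ρ)) * deriv φ r + lam * φ r)
      by linarith [heq r hr]]
    simp only [σ']
    field_simp
    ring
  · refine div_nonpos_of_nonpos_of_nonneg ?_ (sq_nonneg _)
    have hσ'r : v r * σ' r = k / (2 * ρ) * (cosh (r / ρ) / sinh (r / ρ)) * v r * σ r := by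
      simp only [σ, σ']; ring
    rw [hσ'r, sub_nonpos]
    exact mul_le_mul_of_nonneg_right (hv'le r hr) (hσpos r hr.1).le
  · have hsr := hs r hr.1
    calc _ = σ r * (v'' r + (B - k ^ 2 / (4 * ρ ^ 2)
          - k * (k - 2) / (4 * ρ ^ 2 * sinh (r / ρ) ^ 2)) * v r) := by
          field_simp
          ring
      _ < 0 := mul_neg_of_pos_of_neg (hσpos r hr.1) (hsuper r hr)
  · rw [sq, mul_assoc, mul_div_cancel₀ _ (hσpos r hr.1).ne']
    exact hC r hr

lemma one_div_le_mul_coth_div {ρ r a : ℝ} (hρ : 0 < ρ) (hr : 0 < r) (ha : 1 ≤ a) :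
    1 / r ≤ a / ρ * (cosh (r / ρ) / sinh (r / ρ)) := by
  have hs : 0 < sinh (r / ρ) := sinh_pos_iff.2 (div_pos hr hρ)
  have hsinh : ρ * sinh (r / ρ) ≤ r * cosh (r / ρ) := by
    have := mul_le_mul_of_nonneg_left (sinh_le_mul_cosh (div_pos hr hρ).le) hρ.le
    rwa [← mul_assoc, mul_div_cancel₀ _ hρ.ne'] at this
  rw [div_mul_div_comm, div_le_div_iff₀ hr (by positivity)]
  nlinarith [mul_le_mul_of_nonneg_right ha (mul_pos (cosh_pos (r / ρ)) hr).le]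

theorem radial_eigenvalue_gt_of_two_lt {ρ δ k lam : ℝ} {φ : ℝ → ℝ} (hρ : 0 < ρ) (hδ : 0 < δ)
    (hk : 2 < k) (hc : ContinuousOn φ (Icc 0 δ))
    (hd : ∀ r ∈ Ioo 0 δ, DifferentiableAt ℝ φ r ∧ DifferentiableAt ℝ (deriv φ) r)
    (h0 : 0 < φ 0) (hδ0 : φ δ = 0)
    (heq : ∀ r ∈ Ioo 0 δ, deriv (deriv φ) r
      + k / ρ * (cosh (r / ρ) / sinh (r / ρ)) * deriv φ r + lam * φ r = 0) :
    k ^ 2 / (4 * ρ ^ 2) + (π / δ) ^ 2 < lam := by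
  set q := π / δ
  have hq : 0 < q := div_pos pi_pos hδ
  have hqr r (hr : r ∈ Ioo 0 δ) : q * r ∈ Ioo 0 π :=
    ⟨mul_pos hq hr.1, (mul_lt_mul_of_pos_left hr.2 hq).trans_eq (div_mul_cancel₀ _ hδ.ne')⟩
  have hsin r (hr : r ∈ Ioo 0 δ) : 0 < sin (q * r) :=
    sin_pos_of_pos_of_lt_pi (hqr r hr).1 (hqr r hr).2
  have hlin r : HasDerivAt (fun x => q * x) q r := by simpa using (hasDerivAt_id' r).const_mul q
  refine lt_of_radial_supersolution (v := fun x => sin (q * x)) (v' := fun x => q * cos (q * x))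
    (v'' := fun x => -(q ^ 2 * sin (q * x))) (C := sinh (δ / ρ) ^ (k / 2) * q)
    hρ hδ.le hc hd h0 hδ0 heq (fun r _ => ((hlin r).sin).congr_deriv (mul_comm _ _))
    (fun r _ => (((hlin r).cos).const_mul q).congr_deriv (by ring)) hsin (fun r hr => ?_)
    (fun r hr => ?_) (fun r hr => ?_)
  · calc q * cos (q * r) ≤ 1 / r * sin (q * r) := by
          rw [one_div_mul_eq_div, le_div_iff₀ hr.1]
          linarith [mul_cos_le_sin (hqr r hr).1.le (hqr r hr).2.le]
      _ ≤ k / 2 / ρ * (cosh (r / ρ) / sinh (r / ρ)) * sin (q * r) := by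
          gcongr
          · exact (hsin r hr).le
          · exact one_div_le_mul_coth_div hρ hr.1 (by linarith)
      _ = k / (2 * ρ) * (cosh (r / ρ) / sinh (r / ρ)) * sin (q * r) := by rw [div_div]
  · have hV : 0 < k * (k - 2) / (4 * ρ ^ 2 * sinh (r / ρ) ^ 2) := by
      have := sinh_pos_iff.2 (div_pos hr.1 hρ)
      exact div_pos (mul_pos (by linarith) (by linarith)) (by positivity)
    nlinarith [mul_pos hV (hsin r hr)]
  · have hs : 0 ≤ sinh (r / ρ) := (sinh_pos_iff.2 (div_pos hr.1 hρ)).le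
    calc sinh (r / ρ) ^ (k / 2) * sin (q * r) ≤ sinh (δ / ρ) ^ (k / 2) * (q * r) :=
          mul_le_mul (rpow_le_rpow hs (sinh_le_sinh.2 (by gcongr; exact hr.2.le)) (by linarith))
            (sin_le (hqr r hr).1.le) (hsin r hr).le (by positivity)
      _ = sinh (δ / ρ) ^ (k / 2) * q * r := by ring

lemma hasDerivAt_sqrt_mul_cos {ω r : ℝ} (hr : 0 < r) :
    HasDerivAt (fun x => √x * cos (ω * x))
      (cos (ω * r) / (2 * √r) - ω * √r * sin (ω * r)) r := by
  have hsq : 0 < √r := sqrt_pos.2 hr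
  refine ((hasDerivAt_sqrt hr.ne').fun_mul
    ((hasDerivAt_id' r).const_mul ω).cos).congr_deriv ?_
  field_simp
  ring

lemma hasDerivAt_cos_div_two_mul_sqrt_sub {ω r : ℝ} (hr : 0 < r) :
    HasDerivAt (fun x => cos (ω * x) / (2 * √x) - ω * √x * sin (ω * x))
      (-(cos (ω * r) / (4 * r * √r)) - ω * sin (ω * r) / √r - ω ^ 2 * √r * cos (ω * r)) r := by
  have hsq : 0 < √r := sqrt_pos.2 hr
  have hsqd := hasDerivAt_sqrt hr.ne'
  have hlin : HasDerivAt (fun x => ω * x) ω r := by simpa using (hasDerivAt_id' r).const_mul ω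
  refine ((hlin.cos.fun_div (hsqd.const_mul 2) (by positivity)).fun_sub
    ((hsqd.const_mul ω).fun_mul hlin.sin)).congr_deriv ?_
  have hr0 : r ≠ 0 := hr.ne'
  field_simp
  rw [sq_sqrt hr.le]
  field_simp
  ring

lemma sq_mul_sinh_sq_add_mul_sq_nonneg {ρ r : ℝ} (k : ℝ) (hρ : 0 < ρ) (hr : 0 ≤ r) :
    0 ≤ ρ ^ 2 * sinh (r / ρ) ^ 2 + k * (k - 2) * r ^ 2 := by
  have hρs : r ≤ ρ * sinh (r / ρ) := by
    have := mul_le_mul_of_nonneg_left (self_le_sinh_iff.2 (div_nonneg hr hρ.le)) hρ.le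
    rwa [mul_div_cancel₀ _ hρ.ne'] at this
  nlinarith [mul_nonneg (sub_nonneg.2 hρs) (by linarith : 0 ≤ ρ * sinh (r / ρ) + r),
    mul_nonneg (sq_nonneg (k - 1)) (sq_nonneg r)]

lemma sinh_div_rpow_le_mul_sqrt {ρ δ k r : ℝ} (hρ : 0 < ρ) (hk : 1 ≤ k) (hr : 0 < r)
    (hrδ : r ≤ δ) :
    sinh (r / ρ) ^ (k / 2) ≤ √(cosh (δ / ρ) / ρ) * sinh (δ / ρ) ^ ((k - 1) / 2) * √r := by
  have hr' : 0 < r / ρ := div_pos hr hρ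
  have hs : 0 < sinh (r / ρ) := sinh_pos_iff.2 hr'
  have hsK : sinh (r / ρ) ≤ cosh (δ / ρ) / ρ * r :=
    calc sinh (r / ρ) ≤ r / ρ * cosh (r / ρ) := sinh_le_mul_cosh hr'.le
      _ ≤ r / ρ * cosh (δ / ρ) := by
        refine mul_le_mul_of_nonneg_left (cosh_le_cosh.2 ?_) hr'.le
        rw [abs_of_pos hr', abs_of_pos (hr'.trans_le (by gcongr))]
        gcongr
      _ = cosh (δ / ρ) / ρ * r := by ring
  have h₁ : √(sinh (r / ρ)) ≤ √(cosh (δ / ρ) / ρ) * √r := by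
    rw [← sqrt_mul (by positivity)]
    exact sqrt_le_sqrt hsK
  have h₂ : sinh (r / ρ) ^ ((k - 1) / 2) ≤ sinh (δ / ρ) ^ ((k - 1) / 2) :=
    rpow_le_rpow hs.le (sinh_le_sinh.2 (by gcongr)) (by linarith)
  calc sinh (r / ρ) ^ (k / 2) = √(sinh (r / ρ)) * sinh (r / ρ) ^ ((k - 1) / 2) := by
        rw [sqrt_eq_rpow, ← rpow_add hs]
        ring_nf
    _ ≤ √(cosh (δ / ρ) / ρ) * √r * sinh (δ / ρ) ^ ((k - 1) / 2) :=
        mul_le_mul h₁ h₂ (by positivity) (by positivity)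
    _ = √(cosh (δ / ρ) / ρ) * sinh (δ / ρ) ^ ((k - 1) / 2) * √r := by ring

lemma cos_div_two_mul_sqrt_sub_le {ρ ω k r : ℝ} (hρ : 0 < ρ) (hk : 1 ≤ k) (hr : 0 < r)
    (hcos : 0 < cos (ω * r)) (hsin : 0 ≤ ω * sin (ω * r)) :
    cos (ω * r) / (2 * √r) - ω * √r * sin (ω * r)
      ≤ k / (2 * ρ) * (cosh (r / ρ) / sinh (r / ρ)) * (√r * cos (ω * r)) := by
  have hsq : 0 < √r := sqrt_pos.2 hr
  have hr0 : r ≠ 0 := hr.ne'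
  have hv : cos (ω * r) / (2 * √r) = 1 / r * (√r * cos (ω * r)) / 2 := by
    field_simp
    rw [sq_sqrt hr.le]
  have : 0 ≤ ω * √r * sin (ω * r) := by
    rw [mul_right_comm]
    positivity
  calc cos (ω * r) / (2 * √r) - ω * √r * sin (ω * r) ≤ 1 / r * (√r * cos (ω * r)) / 2 := by
        linarith
    _ ≤ k / ρ * (cosh (r / ρ) / sinh (r / ρ)) * (√r * cos (ω * r)) / 2 := by
        gcongr
        exact one_div_le_mul_coth_div hρ hr hk
    _ = k / (2 * ρ) * (cosh (r / ρ) / sinh (r / ρ)) * (√r * cos (ω * r)) := by ring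

lemma sqrt_mul_cos_supersolution {ρ ω k r : ℝ} (hρ : 0 < ρ) (hω : 0 < ω) (hr : 0 < r)
    (hcos : 0 < cos (ω * r)) (hsin : 0 < sin (ω * r)) :
    -(cos (ω * r) / (4 * r * √r)) - ω * sin (ω * r) / √r - ω ^ 2 * √r * cos (ω * r)
      + (ω ^ 2 - k * (k - 2) / (4 * ρ ^ 2 * sinh (r / ρ) ^ 2)) * (√r * cos (ω * r)) < 0 := by
  have hsq : 0 < √r := sqrt_pos.2 hr
  have hs : 0 < sinh (r / ρ) := sinh_pos_iff.2 (div_pos hr hρ)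
  have hr0 : r ≠ 0 := hr.ne'
  have := sq_mul_sinh_sq_add_mul_sq_nonneg k hρ hr.le
  calc _ = -(cos (ω * r) / √r * ((ρ ^ 2 * sinh (r / ρ) ^ 2 + k * (k - 2) * r ^ 2)
        / (4 * r * ρ ^ 2 * sinh (r / ρ) ^ 2))) - ω * sin (ω * r) / √r := by
        field_simp
        rw [sq_sqrt hr.le]
        ring
    _ < 0 := by
        have : 0 < ω * sin (ω * r) / √r := by positivity
        have : 0 ≤ cos (ω * r) / √r * ((ρ ^ 2 * sinh (r / ρ) ^ 2 + k * (k - 2) * r ^ 2)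
          / (4 * r * ρ ^ 2 * sinh (r / ρ) ^ 2)) := by positivity
        linarith

theorem radial_eigenvalue_gt_of_one_le {ρ δ k lam : ℝ} {φ : ℝ → ℝ} (hρ : 0 < ρ) (hδ : 0 < δ)
    (hk : 1 ≤ k) (hc : ContinuousOn φ (Icc 0 δ))
    (hd : ∀ r ∈ Ioo 0 δ, DifferentiableAt ℝ φ r ∧ DifferentiableAt ℝ (deriv φ) r)
    (h0 : 0 < φ 0) (hδ0 : φ δ = 0)
    (heq : ∀ r ∈ Ioo 0 δ, deriv (deriv φ) r
      + k / ρ * (cosh (r / ρ) / sinh (r / ρ)) * deriv φ r + lam * φ r = 0) :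
    k ^ 2 / (4 * ρ ^ 2) + (π / (2 * δ)) ^ 2 < lam := by
  set ω := π / (2 * δ)
  have hω : 0 < ω := div_pos pi_pos (by positivity)
  have hωr r (hr : r ∈ Ioo 0 δ) : ω * r ∈ Ioo 0 (π / 2) :=
    ⟨mul_pos hω hr.1, (mul_lt_mul_of_pos_left hr.2 hω).trans_eq (by simp only [ω]; field_simp)⟩
  have hcos r (hr : r ∈ Ioo 0 δ) : 0 < cos (ω * r) :=
    cos_pos_of_mem_Ioo ⟨by linarith [pi_pos, (hωr r hr).1], (hωr r hr).2⟩
  have hsin r (hr : r ∈ Ioo 0 δ) : 0 < sin (ω * r) :=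
    sin_pos_of_pos_of_lt_pi (hωr r hr).1 (by linarith [pi_pos, (hωr r hr).2])
  -- The factor `√r` makes `v'' + ω² v` negative enough to absorb the potential
  -- `k (k - 2) / (4 ρ² sinh² (r / ρ)) ≥ -1 / (4 r²)` when `k < 2`.
  refine lt_of_radial_supersolution (C := √(cosh (δ / ρ) / ρ) * sinh (δ / ρ) ^ ((k - 1) / 2))
    hρ hδ.le hc hd h0 hδ0 heq (fun r hr => hasDerivAt_sqrt_mul_cos hr.1)
    (fun r hr => hasDerivAt_cos_div_two_mul_sqrt_sub hr.1)
    (fun r hr => mul_pos (sqrt_pos.2 hr.1) (hcos r hr))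
    (fun r hr => cos_div_two_mul_sqrt_sub_le hρ hk hr.1 (hcos r hr) (mul_pos hω (hsin r hr)).le)
    (fun r hr => (sqrt_mul_cos_supersolution (k := k) hρ hω hr.1 (hcos r hr)
      (hsin r hr)).trans_eq' (by ring)) fun r hr => ?_
  calc sinh (r / ρ) ^ (k / 2) * (√r * cos (ω * r))
        ≤ √(cosh (δ / ρ) / ρ) * sinh (δ / ρ) ^ ((k - 1) / 2) * √r * √r :=
          mul_le_mul (sinh_div_rpow_le_mul_sqrt hρ hk hr.1 hr.2.le)
            (mul_le_of_le_one_right (sqrt_nonneg r) (cos_le_one _))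
            (mul_pos (sqrt_pos.2 hr.1) (hcos r hr)).le (by positivity)
      _ = √(cosh (δ / ρ) / ρ) * sinh (δ / ρ) ^ ((k - 1) / 2) * r := by
          rw [mul_assoc, mul_self_sqrt hr.1.le]

/-- Lower bounds for the radial Dirichlet eigenvalue in a hyperbolic disk of radius `δ`:
`λ > k²/(4ρ²) + (π/(2δ))²`, and `λ > k²/(4ρ²) + (π/δ)²` when `k ≥ 3`. -/
theorem dirichlet_eigenvalue_lower_bounds
    (ρ δ : ℝ) (hρ : 0 < ρ) (hδ : 0 < δ) (k : ℕ) (hk : 1 ≤ k)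
    (lam : ℝ) (φ : ℝ → ℝ)
    (hc : ContinuousOn φ (Set.Icc 0 δ))
    (hd : ∀ r ∈ Set.Ioo (0 : ℝ) δ,
      DifferentiableAt ℝ φ r ∧ DifferentiableAt ℝ (deriv φ) r)
    (h0 : φ 0 = 1) (hδ0 : φ δ = 0)
    (heq : ∀ r ∈ Set.Ioo (0 : ℝ) δ,
      deriv (deriv φ) r
        + ((k : ℝ) / ρ) * (Real.cosh (r / ρ) / Real.sinh (r / ρ)) * deriv φ r
        + lam * φ r = 0) :
    (k : ℝ) ^ 2 / (4 * ρ ^ 2) + (π / (2 * δ)) ^ 2 < lam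
    ∧ (3 ≤ k → (k : ℝ) ^ 2 / (4 * ρ ^ 2) + (π / δ) ^ 2 < lam) := by
  have hφ0 : 0 < φ 0 := h0 ▸ one_pos
  exact ⟨radial_eigenvalue_gt_of_one_le hρ hδ (by exact_mod_cast hk) hc hd hφ0 hδ0 heq,
    fun hk3 => radial_eigenvalue_gt_of_two_lt hρ hδ (by exact_mod_cast hk3) hc hd hφ0 hδ0 heq⟩
end
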